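/- For n ≥ 2 and 1 ≤ k < n, if h_{n,k} denotes the number of permutations of [n] avoiding {3214, 3241, 4213, 4231} whose first entry is k, then h_{n,k} = ∑_{j=k-1}^{n-1} h_{n-1,j}, where h_{n-1,n-1} counts those permutations of [n-1] with first entry n-1. -/

import Mathlib

def Contains {n k : ℕ} (σ : Equiv.Perm (Fin n)) (τ : Fin k → ℕ) : Prop :=
  ∃ f : Fin k → Fin n, StrictMono f ∧ ∀ a b : Fin k, τ a < τ b ↔ σ (f a) < σ (f b)

def AvoidsT1 {n : ℕ} (σ : Equiv.Perm (Fin n)) : Prop :=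
  ¬ Contains σ ![2,1,0,3] ∧ ¬ Contains σ ![2,1,3,0] ∧
  ¬ Contains σ ![3,1,0,2] ∧ ¬ Contains σ ![3,1,2,0]

/-- `hT1 n k` = number of permutations of `[n]` avoiding `T₁` whose first entry
is `k` (1-based value `k`, i.e. 0-based value `k - 1`). -/
noncomputable def hT1 (n k : ℕ) : ℕ :=
  Nat.card {σ : Equiv.Perm (Fin n) // AvoidsT1 σ ∧
    ∀ i : Fin n, (i : ℕ) = 0 → ((σ i : ℕ) + 1 = k)}

/-!
The patterns of `T₁` are exactly the order types of positions `i < j < l < m` with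
`σ j < σ i` and `σ j` strictly between `σ l` and `σ m`. Let `σ` avoid `T₁` with first entry
`k < n`. If the second entry lies strictly between `1` and `k`, it completes an occurrence with
the entries `1` and `n`, which both come later. Hence the second entry is either `1`, and deleting
it is a bijection onto the avoiders of length `n - 1` starting with `k - 1`, or it exceeds `k`, and
deleting the first entry is a bijection onto the avoiders of length `n - 1` starting with some
`j ≥ k`.
-/

open Equiv Finset

theorem contains_of_strictMono_comp {n k : ℕ} {σ : Perm (Fin n)} {τ : Fin k → ℕ}
    {f : Fin k → Fin n} (hf : StrictMono f) {e : Fin k → Fin k} (he : Function.Surjective e)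
    (hτ : StrictMono (τ ∘ e)) (hσ : StrictMono (σ ∘ f ∘ e)) : Contains σ τ := by
  refine ⟨f, hf, fun a b => ?_⟩
  obtain ⟨a, rfl⟩ := he a
  obtain ⟨b, rfl⟩ := he b
  exact hτ.lt_iff_lt.trans hσ.lt_iff_lt.symm

theorem strictMono_vecCons₄ {α : Type*} [Preorder α] {a b c d : α} (hab : a < b) (hbc : b < c)
    (hcd : c < d) : StrictMono ![a, b, c, d] :=
  Fin.strictMono_iff_lt_succ.2 fun i => by fin_cases i <;> assumption

theorem Equiv.optionCongr_removeNone {α β : Type*} (e : Option α ≃ Option β) (he : e none = none) :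
    optionCongr (removeNone e) = e := by
  ext1 x
  cases x with
  | none => simp [he]
  | some x =>
    have hsome : e (some x) ≠ none := he ▸ e.injective.ne (Option.some_ne_none x)
    exact removeNone_some e (Option.ne_none_iff_exists'.1 hsome)

theorem Nat.card_subtype_eq_sum_card_fiberwise {α : Type*} [Finite α] {P : α → Prop}
    {g : α → ℕ} {S : Finset ℕ} (h : ∀ x, P x → g x ∈ S) :
    Nat.card {x // P x} = ∑ j ∈ S, Nat.card {x // P x ∧ g x = j} := by
  classical
  have := Fintype.ofFinite α
  simp only [Nat.card_eq_fintype_card, Fintype.card_subtype]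
  rw [card_eq_sum_card_fiberwise (f := g) (t := S) fun x hx => h x (by simpa using hx)]
  simp [filter_filter]

section T1Quad

variable {n : ℕ}

def IsT1Quad (σ : Perm (Fin n)) (i j l m : Fin n) : Prop :=
  i < j ∧ j < l ∧ l < m ∧ σ j < σ i ∧ (σ l < σ j ∧ σ j < σ m ∨ σ m < σ j ∧ σ j < σ l)

def HasT1Quad (σ : Perm (Fin n)) : Prop :=
  ∃ i j l m, IsT1Quad σ i j l m

theorem hasT1Quad_of_contains {σ : Perm (Fin n)} {τ : Fin 4 → ℕ} (hτ : Contains σ τ)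
    (h10 : τ 1 < τ 0) (hbetween : τ 2 < τ 1 ∧ τ 1 < τ 3 ∨ τ 3 < τ 1 ∧ τ 1 < τ 2) :
    HasT1Quad σ := by
  obtain ⟨f, hf, hiso⟩ := hτ
  refine ⟨f 0, f 1, f 2, f 3, hf (by decide), hf (by decide), hf (by decide), (hiso 1 0).1 h10,
    ?_⟩
  simpa only [hiso] using hbetween

theorem IsT1Quad.not_avoidsT1 {σ : Perm (Fin n)} {i j l m : Fin n} (h : IsT1Quad σ i j l m) :
    ¬ AvoidsT1 σ := by
  obtain ⟨hij, hjl, hlm, hσji, hbetween⟩ := h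
  have hf := strictMono_vecCons₄ hij hjl hlm
  rintro ⟨h3214, h3241, h4213, h4231⟩
  -- `e r` is the position of the value `r` in the pattern.
  have chain : ∀ {e : Fin 4 → Fin 4} {τ : Fin 4 → ℕ}, Function.Surjective e →
      StrictMono (τ ∘ e) → (∀ r : Fin 3, σ (![i, j, l, m] (e r.castSucc)) <
        σ (![i, j, l, m] (e r.succ))) → Contains σ τ := fun he hτ hσ =>
    contains_of_strictMono_comp hf he hτ (Fin.strictMono_iff_lt_succ.2 hσ)
  rcases hbetween with ⟨hσlj, hσjm⟩ | ⟨hσmj, hσjl⟩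
  · rcases lt_or_gt_of_ne (σ.injective.ne (hij.trans (hjl.trans hlm)).ne) with hσim | hσmi
    · exact h3214 (chain (e := ![2, 1, 0, 3]) (by decide)
        (Fin.strictMono_iff_lt_succ.2 (by decide)) fun r => by fin_cases r <;> assumption)
    · exact h4213 (chain (e := ![2, 1, 3, 0]) (by decide)
        (Fin.strictMono_iff_lt_succ.2 (by decide)) fun r => by fin_cases r <;> assumption)
  · rcases lt_or_gt_of_ne (σ.injective.ne (hij.trans hjl).ne) with hσil | hσli
    · exact h3241 (chain (e := ![3, 1, 0, 2]) (by decide)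
        (Fin.strictMono_iff_lt_succ.2 (by decide)) fun r => by fin_cases r <;> assumption)
    · exact h4231 (chain (e := ![3, 1, 2, 0]) (by decide)
        (Fin.strictMono_iff_lt_succ.2 (by decide)) fun r => by fin_cases r <;> assumption)

theorem avoidsT1_iff_not_hasT1Quad {σ : Perm (Fin n)} : AvoidsT1 σ ↔ ¬ HasT1Quad σ := by
  refine ⟨fun hσ ⟨i, j, l, m, h⟩ => h.not_avoidsT1 hσ, fun h => ?_⟩
  refine ⟨fun hc => h ?_, fun hc => h ?_, fun hc => h ?_, fun hc => h ?_⟩ <;>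
    exact hasT1Quad_of_contains hc (by decide) (by decide)

end T1Quad

section Insertion

variable {M : ℕ}

/-- `τ` with the value `p` inserted at position `q`. -/
def insertPerm (q p : Fin (M + 1)) (τ : Perm (Fin M)) : Perm (Fin (M + 1)) :=
  ((finSuccEquiv' q).trans (optionCongr τ)).trans (finSuccEquiv' p).symm

@[simp]
theorem insertPerm_apply_self (q p : Fin (M + 1)) (τ : Perm (Fin M)) : insertPerm q p τ q = p := by
  simp [insertPerm]

@[simp]
theorem insertPerm_apply_succAbove (q p : Fin (M + 1)) (τ : Perm (Fin M)) (i : Fin M) :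
    insertPerm q p τ (q.succAbove i) = p.succAbove (τ i) := by
  simp [insertPerm]

theorem insertPerm_injective (q p : Fin (M + 1)) : Function.Injective (insertPerm q p) :=
  fun τ τ' h => Equiv.ext fun i => Fin.succAbove_right_injective (p := p) <| by
    rw [← insertPerm_apply_succAbove q p τ, ← insertPerm_apply_succAbove q p τ', h]

theorem exists_insertPerm_eq {q p : Fin (M + 1)} {σ : Perm (Fin (M + 1))} (hσ : σ q = p) :
    ∃ τ, insertPerm q p τ = σ := by
  set e := ((finSuccEquiv' q).symm.trans σ).trans (finSuccEquiv' p)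
  have he : e none = none := by simp [e, hσ]
  refine ⟨removeNone e, Equiv.ext fun x => ?_⟩
  simp [insertPerm, optionCongr_removeNone e he, e]

theorem card_subtype_eq_card_insertPerm {q p : Fin (M + 1)} (P : Perm (Fin (M + 1)) → Prop)
    (hP : ∀ σ, P σ → σ q = p) :
    Nat.card {σ // P σ} = Nat.card {τ // P (insertPerm q p τ)} := by
  refine (Nat.card_congr (Equiv.ofBijective (fun τ => ⟨insertPerm q p τ.1, τ.2⟩) ⟨?_, ?_⟩)).symm
  · exact fun τ τ' h => Subtype.ext (insertPerm_injective q p (congrArg Subtype.val h))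
  · rintro ⟨σ, hσ⟩
    obtain ⟨τ, rfl⟩ := exists_insertPerm_eq (hP σ hσ)
    exact ⟨⟨τ, hσ⟩, rfl⟩

theorem isT1Quad_insertPerm_succAbove_iff (q p : Fin (M + 1)) (τ : Perm (Fin M))
    (i j l m : Fin M) :
    IsT1Quad (insertPerm q p τ) (q.succAbove i) (q.succAbove j) (q.succAbove l) (q.succAbove m) ↔
      IsT1Quad τ i j l m := by
  simp only [IsT1Quad, insertPerm_apply_succAbove, Fin.succAbove_lt_succAbove_iff]

theorem HasT1Quad.insertPerm {τ : Perm (Fin M)} (h : HasT1Quad τ) (q p : Fin (M + 1)) :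
    HasT1Quad (insertPerm q p τ) :=
  let ⟨i, j, l, m, h⟩ := h
  ⟨_, _, _, _, (isT1Quad_insertPerm_succAbove_iff q p τ i j l m).2 h⟩

theorem IsT1Quad.hasT1Quad_of_insertPerm {q p : Fin (M + 1)} {τ : Perm (Fin M)}
    {i j l m : Fin (M + 1)} (h : IsT1Quad (insertPerm q p τ) i j l m)
    (hi : i ≠ q) (hj : j ≠ q) (hl : l ≠ q) (hm : m ≠ q) : HasT1Quad τ := by
  obtain ⟨i, rfl⟩ := Fin.exists_succAbove_eq hi
  obtain ⟨j, rfl⟩ := Fin.exists_succAbove_eq hj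
  obtain ⟨l, rfl⟩ := Fin.exists_succAbove_eq hl
  obtain ⟨m, rfl⟩ := Fin.exists_succAbove_eq hm
  exact ⟨i, j, l, m, (isT1Quad_insertPerm_succAbove_iff q p τ i j l m).1 h⟩

end Insertion

section Counting

variable {N : ℕ}

theorem Fin.one_lt_of_ne {x : Fin (N + 2)} (h0 : x ≠ 0) (h1 : x ≠ 1) : 1 < x := by
  rw [Ne, Fin.ext_iff, Fin.val_zero] at h0
  rw [Ne, Fin.ext_iff, Fin.val_one] at h1
  rw [Fin.lt_def, Fin.val_one]
  omega

theorem insertPerm_zero_apply_one (p : Fin (N + 2)) (τ : Perm (Fin (N + 1))) :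
    insertPerm 0 p τ 1 = p.succAbove (τ 0) :=
  insertPerm_apply_succAbove 0 p τ 0

theorem insertPerm_one_zero_apply_zero (τ : Perm (Fin (N + 1))) :
    insertPerm 1 0 τ 0 = (τ 0).succ :=
  insertPerm_apply_succAbove 1 0 τ 0

/-- An occurrence using position `0` can use position `1` instead. -/
theorem avoidsT1_insertPerm_zero_iff {p : Fin (N + 2)} {τ : Perm (Fin (N + 1))}
    (hp : p ≤ (τ 0).castSucc) : AvoidsT1 (insertPerm 0 p τ) ↔ AvoidsT1 τ := by
  rw [avoidsT1_iff_not_hasT1Quad, avoidsT1_iff_not_hasT1Quad, not_iff_not]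
  refine ⟨fun ⟨i, j, l, m, h⟩ => ?_, fun h => h.insertPerm 0 p⟩
  have hj : j ≠ 0 := (h.1.trans_le' (Fin.zero_le i)).ne'
  have hl : l ≠ 0 := (h.2.1.trans_le' (Fin.zero_le j)).ne'
  have hm : m ≠ 0 := (h.2.2.1.trans_le' (Fin.zero_le l)).ne'
  rcases eq_or_ne i 0 with rfl | hi
  · have hσ1 : p < insertPerm 0 p τ 1 := by
      rwa [insertPerm_zero_apply_one, Fin.lt_succAbove_iff_le_castSucc]
    have hσj : insertPerm 0 p τ j < insertPerm 0 p τ 1 := by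
      simpa using h.2.2.2.1.trans hσ1
    have h1j : 1 < j := Fin.one_lt_of_ne hj (by rintro rfl; exact hσj.false)
    exact IsT1Quad.hasT1Quad_of_insertPerm ⟨h1j, h.2.1, h.2.2.1, hσj, h.2.2.2.2⟩
      one_ne_zero hj hl hm
  · exact h.hasT1Quad_of_insertPerm hi hj hl hm

/-- The minimum, at position `1`, can play no role in an occurrence. -/
theorem avoidsT1_insertPerm_one_zero_iff {τ : Perm (Fin (N + 1))} :
    AvoidsT1 (insertPerm 1 0 τ) ↔ AvoidsT1 τ := by
  rw [avoidsT1_iff_not_hasT1Quad, avoidsT1_iff_not_hasT1Quad, not_iff_not]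
  refine ⟨fun ⟨i, j, l, m, h⟩ => ?_, fun h => h.insertPerm 1 0⟩
  obtain ⟨hij, hjl, hlm, hσji, hbetween⟩ := h
  have hi : i ≠ 1 := by rintro rfl; simp at hσji
  have hj : j ≠ 1 := by rintro rfl; simp at hbetween
  have h1j : 1 < j := Fin.one_lt_of_ne (hij.trans_le' (Fin.zero_le i)).ne' hj
  exact IsT1Quad.hasT1Quad_of_insertPerm ⟨hij, hjl, hlm, hσji, hbetween⟩ hi hj
    (h1j.trans hjl).ne' (h1j.trans (hjl.trans hlm)).ne'

theorem AvoidsT1.second_eq_zero_or_first_lt_second {σ : Perm (Fin (N + 2))} (hσ : AvoidsT1 σ)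
    (hlast : σ 0 ≠ Fin.last _) : σ 1 = 0 ∨ σ 0 < σ 1 := by
  by_contra! h
  obtain ⟨h1, h10⟩ := h
  have hσ10 : σ 1 < σ 0 := h10.lt_of_ne (σ.injective.ne one_ne_zero)
  obtain ⟨a, ha⟩ := σ.surjective 0
  obtain ⟨b, hb⟩ := σ.surjective (Fin.last _)
  have h1a : 1 < a := Fin.one_lt_of_ne
    (fun h => (Fin.zero_le (σ 1)).not_gt (by rwa [← h, ha] at hσ10)) (fun h => h1 (h ▸ ha))
  have h1b : 1 < b := Fin.one_lt_of_ne (fun h => hlast (h ▸ hb))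
    (fun h => (Fin.le_last (σ 0)).not_gt (by rwa [← h, hb] at hσ10))
  have hab : a ≠ b := by
    rintro rfl
    exact Fin.last_pos.ne (ha.symm.trans hb)
  have hσ1_pos : 0 < σ 1 := Fin.pos_iff_ne_zero.2 h1
  have hσ1_lt : σ 1 < Fin.last _ := hσ10.trans_le (Fin.le_last _)
  rcases hab.lt_or_gt with hab | hba
  · exact IsT1Quad.not_avoidsT1
      ⟨Fin.one_pos', h1a, hab, hσ10, Or.inl ⟨ha ▸ hσ1_pos, hb ▸ hσ1_lt⟩⟩ hσ
  · exact IsT1Quad.not_avoidsT1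
      ⟨Fin.one_pos', h1b, hba, hσ10, Or.inr ⟨ha ▸ hσ1_pos, hb ▸ hσ1_lt⟩⟩ hσ

theorem hT1_succ_eq_card (j : ℕ) :
    hT1 (N + 1) j = Nat.card {σ : Perm (Fin (N + 1)) // AvoidsT1 σ ∧ (σ 0 : ℕ) + 1 = j} := by
  simp only [hT1, Fin.val_eq_zero_iff, forall_eq]

theorem hT1_succ_zero : hT1 (N + 1) 0 = 0 := by
  simp [hT1_succ_eq_card]

theorem hT1_succ_val_add_one (p : Fin (N + 1)) :
    hT1 (N + 1) (p + 1) = Nat.card {σ : Perm (Fin (N + 1)) // AvoidsT1 σ ∧ σ 0 = p} := by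
  simp only [hT1_succ_eq_card, Nat.add_right_cancel_iff, Fin.val_inj]

theorem card_avoidsT1_of_second_eq_zero (p : Fin (N + 2)) :
    Nat.card {σ : Perm (Fin (N + 2)) // AvoidsT1 σ ∧ σ 0 = p ∧ σ 1 = 0} = hT1 (N + 1) p := by
  rw [card_subtype_eq_card_insertPerm (q := 1) (p := 0) _ fun σ h => h.2.2]
  simp only [avoidsT1_insertPerm_one_zero_iff, insertPerm_one_zero_apply_zero,
    insertPerm_apply_self, and_true]
  rcases Fin.eq_zero_or_eq_succ p with rfl | ⟨s, rfl⟩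
  · simp [Fin.succ_ne_zero, hT1_succ_zero]
  · simp [Fin.succ_inj, hT1_succ_val_add_one]

theorem card_avoidsT1_of_first_lt_second (p : Fin (N + 2)) :
    Nat.card {σ : Perm (Fin (N + 2)) // AvoidsT1 σ ∧ σ 0 = p ∧ p < σ 1} =
      ∑ j ∈ Ioc (p : ℕ) (N + 1), hT1 (N + 1) j := by
  have hmem (τ : Perm (Fin (N + 1))) :
      p ≤ (τ 0).castSucc ↔ (τ 0 : ℕ) + 1 ∈ Ioc (p : ℕ) (N + 1) := by
    rw [Fin.le_def, Fin.val_castSucc, mem_Ioc]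
    omega
  rw [card_subtype_eq_card_insertPerm (q := 0) (p := p) _ fun σ h => h.2.1]
  simp only [insertPerm_apply_self, insertPerm_zero_apply_one, Fin.lt_succAbove_iff_le_castSucc,
    true_and]
  rw [Nat.card_subtype_eq_sum_card_fiberwise fun τ h => (hmem τ).1 h.2]
  refine sum_congr rfl fun j hj => ?_
  rw [hT1_succ_eq_card]
  refine Nat.card_congr (Equiv.subtypeEquivRight fun τ => ⟨?_, ?_⟩)
  · rintro ⟨⟨hA, hp⟩, rfl⟩
    exact ⟨(avoidsT1_insertPerm_zero_iff hp).1 hA, rfl⟩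
  · rintro ⟨hA, rfl⟩
    have hp := (hmem τ).2 hj
    exact ⟨⟨(avoidsT1_insertPerm_zero_iff hp).2 hA, hp⟩, rfl⟩

theorem card_avoidsT1_of_first_eq (p : Fin (N + 2)) (hp : p ≠ Fin.last _) :
    Nat.card {σ : Perm (Fin (N + 2)) // AvoidsT1 σ ∧ σ 0 = p} =
      Nat.card {σ : Perm (Fin (N + 2)) // AvoidsT1 σ ∧ σ 0 = p ∧ σ 1 = 0} +
        Nat.card {σ : Perm (Fin (N + 2)) // AvoidsT1 σ ∧ σ 0 = p ∧ p < σ 1} := by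
  have hdisj : Disjoint (fun σ : Perm (Fin (N + 2)) => AvoidsT1 σ ∧ σ 0 = p ∧ σ 1 = 0)
      (fun σ => AvoidsT1 σ ∧ σ 0 = p ∧ p < σ 1) := by
    intro r hr hs σ hσ
    obtain ⟨-, h0, h1⟩ := hr σ hσ
    obtain ⟨-, -, hlt⟩ := hs σ hσ
    exact (Fin.zero_le p).not_gt (h1 ▸ hlt)
  classical
  simp only [Nat.card_eq_fintype_card, ← Fintype.card_subtype_or_disjoint _ _ hdisj]
  refine Fintype.card_congr (Equiv.subtypeEquivRight fun σ => ?_)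
  constructor
  · rintro ⟨hA, rfl⟩
    exact (hA.second_eq_zero_or_first_lt_second hp).imp (⟨hA, rfl, ·⟩) (⟨hA, rfl, ·⟩)
  · rintro (⟨hA, h0, -⟩ | ⟨hA, h0, -⟩) <;> exact ⟨hA, h0⟩

end Counting

theorem hT1_recurrence (n k : ℕ) (hn : 2 ≤ n) (hk1 : 1 ≤ k) (hkn : k < n) :
    hT1 n k = ∑ j ∈ Finset.Icc (k - 1) (n - 1), hT1 (n - 1) j := by
  obtain ⟨N, rfl⟩ : ∃ N, n = N + 2 := ⟨n - 2, by omega⟩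
  obtain ⟨p, rfl⟩ : ∃ p : Fin (N + 2), k = p + 1 := ⟨⟨k - 1, by omega⟩, by simp; omega⟩
  have hp : p ≠ Fin.last _ := by simpa [Fin.ext_iff] using hkn.ne
  rw [hT1_succ_val_add_one, card_avoidsT1_of_first_eq p hp, card_avoidsT1_of_second_eq_zero,
    card_avoidsT1_of_first_lt_second, Nat.add_sub_cancel]
  exact add_sum_Ioc_eq_sum_Icc (by omega)
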